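/- arXiv:1812.08257 — 2 statements merged into one kernel-verified Lean document; each statement's English description precedes it below -/
import Mathlib

section
/- Let H : ℝ⁴×ℝ⁴ → ℝ be differentiable in (q,p) with q = (q_l,q_m), p = (p_l,p_m), q_l,q_m,p_l,p_m ∈ ℝ². Let D_l, D_m, K_Pm, K_Pl, K_I ∈ ℝ^{2×2}, q_* ∈ ℝ², R_2 = blockdiag(D_l, D_m), B = [0_{2×2}; I_2]. Define u(q,p) = −K_Pm ∇_{p_m}H − K_I(q_m−q_*) − K_Pl ∇_{p_l}H and H_PI(q,p) = H(q,p) + (1/2)(q_m−q_*)^T K_I (q_m−q_*). Then for every (q,p) the closed-loop vector field (∇_p H, −∇_q H − R_2 ∇_p H + B·u(q,p)) equals [[0_{4×4}, I_4], [−I_4, J_PI2 − R_PI2]] · ∇H_PI(q,p), where R_PI2 = [[D_l, (1/2)K_Pl^T], [(1/2)K_Pl, D_m+K_Pm]] and J_PI2 = (1/2)[[0, K_Pl^T], [−K_Pl, 0]]. -/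
open InnerProductSpace


open Matrix

noncomputable section

/-- Index of the 4-dimensional position (resp. momentum) block: links ⊕ motors. -/
abbrev I4 := Fin 2 ⊕ Fin 2
/-- Index of the full 8-dimensional state `(q, p)`. -/
abbrev I8 := I4 ⊕ I4
/-- The state space `ℝ⁸` as a Euclidean space (so that gradients are defined). -/
abbrev E8 := EuclideanSpace ℝ I8

/-- Motor positions `q_m` of a state. -/
def qm (x : E8) : Fin 2 → ℝ := fun i => x (Sum.inl (Sum.inr i))

/-- `R_2 = blockdiag(D_l, D_m)`. -/
def R2 (Dl Dm : Matrix (Fin 2) (Fin 2) ℝ) : Matrix I4 I4 ℝ := Matrix.fromBlocks Dl 0 0 Dm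

/-- `B = [0_{2×2}; I_2]`. -/
def Bmat : Matrix I4 (Fin 2) ℝ := Matrix.fromRows 0 1

/-- `R_PI2 = [[D_l, (1/2)K_Pl^T], [(1/2)K_Pl, D_m + K_Pm]]`. -/
def RPI2 (Dl Dm Kpm Kpl : Matrix (Fin 2) (Fin 2) ℝ) : Matrix I4 I4 ℝ :=
  Matrix.fromBlocks Dl ((1 / 2 : ℝ) • Kplᵀ) ((1 / 2 : ℝ) • Kpl) (Dm + Kpm)

/-- `J_PI2 = (1/2)[[0, K_Pl^T], [−K_Pl, 0]]`. -/
def JPI2 (Kpl : Matrix (Fin 2) (Fin 2) ℝ) : Matrix I4 I4 ℝ :=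
  (1 / 2 : ℝ) • Matrix.fromBlocks 0 Kplᵀ (-Kpl) 0

/-- The PI control law `u(q,p) = −K_Pm ∇_{p_m}H − K_I(q_m − q_*) − K_Pl ∇_{p_l}H`. -/
def uPI (H : E8 → ℝ) (Kpm Kpl KI : Matrix (Fin 2) (Fin 2) ℝ) (qstar : Fin 2 → ℝ)
    (x : E8) : Fin 2 → ℝ :=
  -(Kpm.mulVec fun i => gradient H x (Sum.inr (Sum.inr i)))
    - KI.mulVec (fun i => qm x i - qstar i)
    - Kpl.mulVec fun i => gradient H x (Sum.inr (Sum.inl i))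

/-- `H_PI(q,p) = H(q,p) + (1/2)(q_m − q_*)^T K_I (q_m − q_*)`. -/
def HPI (H : E8 → ℝ) (KI : Matrix (Fin 2) (Fin 2) ℝ) (qstar : Fin 2 → ℝ) (x : E8) : ℝ :=
  H x + (1 / 2 : ℝ) *
    ((fun i => qm x i - qstar i) ⬝ᵥ KI.mulVec fun i => qm x i - qstar i)

abbrev E2 := EuclideanSpace ℝ (Fin 2)

def Tproj : E8 →ₗ[ℝ] E2 where
  toFun x := WithLp.toLp 2 (fun i => x (Sum.inl (Sum.inr i)))
  map_add' x y := rfl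
  map_smul' c x := rfl

def MKI (KI : Matrix (Fin 2) (Fin 2) ℝ) : E2 →ₗ[ℝ] E2 where
  toFun y := WithLp.toLp 2 (KI.mulVec y)
  map_add' x y := by ext i; simp [Matrix.mulVec_add]
  map_smul' c x := by ext i; simp [Matrix.mulVec_smul]

def cst (q : Fin 2 → ℝ) : E2 := WithLp.toLp 2 q

def Tc : E8 →L[ℝ] E2 := Tproj.toContinuousLinearMap
def Mc (KI : Matrix (Fin 2) (Fin 2) ℝ) : E2 →L[ℝ] E2 := (MKI KI).toContinuousLinearMap

open RealInnerProductSpace in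
lemma grad_quad (KI : Matrix (Fin 2) (Fin 2) ℝ) (hKI : KI.IsSymm) (qstar : Fin 2 → ℝ)
    (x : E8) (k : I8) :
    HasGradientAt (fun y : E8 => (1/2 : ℝ) * ⟪Tc y - cst qstar, (Mc KI) (Tc y - cst qstar)⟫)
      ((toDual ℝ E8).symm ((1/2 : ℝ) •
        ((fderivInnerCLM ℝ (Tc x - cst qstar, (Mc KI) (Tc x - cst qstar))).comp
          (Tc.prod ((Mc KI).comp Tc))))) x := by
  have h1 : HasFDerivAt (fun y : E8 => Tc y - cst qstar) Tc x :=
    (Tc.hasFDerivAt).sub_const _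
  have h2 : HasFDerivAt (fun y : E8 => (Mc KI) (Tc y - cst qstar)) ((Mc KI).comp Tc) x :=
    ((Mc KI).hasFDerivAt).comp x h1
  have h3 := (h1.inner ℝ h2).const_mul (1/2 : ℝ)
  exact h3.hasGradientAt


open RealInnerProductSpace in
lemma grad_HPI (H : E8 → ℝ) (hH : Differentiable ℝ H) (KI : Matrix (Fin 2) (Fin 2) ℝ)
    (hKI : KI.IsSymm) (qstar : Fin 2 → ℝ) (x : E8) (k : I8) :
    gradient (HPI H KI qstar) x k = gradient H x k +
      Sum.elim (Sum.elim (fun _ => 0) (KI.mulVec fun j => qm x j - qstar j)) (fun _ => 0) k := by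
  set v : E2 := Tc x - cst qstar with hv
  set D : E8 →L[ℝ] ℝ := (1/2 : ℝ) •
      ((fderivInnerCLM ℝ (v, (Mc KI) v)).comp (Tc.prod ((Mc KI).comp Tc))) with hD
  set g : E8 := (toDual ℝ E8).symm D with hg
  have hQ := grad_quad KI hKI qstar x k
  have hQeq : HPI H KI qstar = fun y : E8 =>
      H y + (1/2 : ℝ) * ⟪Tc y - cst qstar, (Mc KI) (Tc y - cst qstar)⟫ := by
    funext y
    unfold HPI
    simp only [PiLp.inner_apply, RCLike.inner_apply, conj_trivial, dotProduct]
    congr 2; exact Finset.sum_congr rfl fun i _ => by rw [mul_comm]; rfl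
  have hsum : HasGradientAt (HPI H KI qstar) (gradient H x + g) x := by
    rw [hQeq, hasGradientAt_iff_hasFDerivAt, map_add, hg,
      LinearIsometryEquiv.apply_symm_apply]
    have h2 := hQ.hasFDerivAt
    rw [LinearIsometryEquiv.apply_symm_apply] at h2
    exact (hH x).hasGradientAt.hasFDerivAt.add h2
  rw [hsum.gradient]
  have hgk : g k = D (EuclideanSpace.single k 1) := by
    have h := InnerProductSpace.toDual_symm_apply (𝕜 := ℝ) (E := E8) (y := D)
      (x := EuclideanSpace.single k 1)
    rw [EuclideanSpace.inner_single_right] at h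
    simpa [hg] using h
  have hadd : (gradient H x + g) k = gradient H x k + g k := rfl
  rw [hadd, hgk]
  congr 1
  rw [hD]
  simp only [ContinuousLinearMap.coe_smul', Pi.smul_apply, ContinuousLinearMap.coe_comp',
    Function.comp_apply, ContinuousLinearMap.prod_apply, fderivInnerCLM_apply, smul_eq_mul,
    PiLp.inner_apply, RCLike.inner_apply, conj_trivial]
  have hTc : ∀ (z : E8) (i : Fin 2), Tc z i = z (Sum.inl (Sum.inr i)) := fun _ _ => rfl
  have hMc : ∀ (z : E2), ((Mc KI) z).ofLp = KI.mulVec z := fun _ => rfl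
  have hvdef : ∀ i, v i = x (Sum.inl (Sum.inr i)) - qstar i := fun _ => rfl
  have h01 : KI 1 0 = KI 0 1 := hKI.apply 0 1
  rcases k with (k|k)|k
  · fin_cases k <;>
      simp [hTc, hMc, EuclideanSpace.single_apply, Matrix.mulVec, dotProduct, Fin.sum_univ_two]
  · fin_cases k <;>
      simp only [hTc, hMc, hvdef, EuclideanSpace.single_apply, Matrix.mulVec, dotProduct,
        Fin.sum_univ_two, Sum.elim_inl, Sum.elim_inr, qm] <;>
      simp <;> simp only [h01] <;> ring
  · fin_cases k <;>
      simp [hTc, hMc, EuclideanSpace.single_apply, Matrix.mulVec, dotProduct, Fin.sum_univ_two]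

/-- The open-loop mechanical vector field with input `u`:
`(q̇, ṗ) = (∇_p H, −∇_q H − R_2 ∇_p H + B u)`. -/
def openLoop (H : E8 → ℝ) (Dl Dm : Matrix (Fin 2) (Fin 2) ℝ) (u : Fin 2 → ℝ)
    (x : E8) : I8 → ℝ := fun i =>
  match i with
  | Sum.inl j => gradient H x (Sum.inr j)
  | Sum.inr j => -(gradient H x (Sum.inl j))
      - ((R2 Dl Dm).mulVec fun k => gradient H x (Sum.inr k)) j
      + (Bmat.mulVec u) j

/-- Proposition 1(i): the mechanical system in closed loop with the PI
controller `u` admits the port-Hamiltonian representation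
`(q̇, ṗ) = [[0, I₄], [−I₄, J_PI2 − R_PI2]] ∇H_PI(q, p)`.
(`K_I` is symmetric, as it is a positive definite gain in the paper.) -/
theorem closedLoop_PI_pH (H : E8 → ℝ) (hH : Differentiable ℝ H)
    (Dl Dm Kpm Kpl KI : Matrix (Fin 2) (Fin 2) ℝ) (hKI : KI.IsSymm)
    (qstar : Fin 2 → ℝ) :
    ∀ x : E8,
      openLoop H Dl Dm (uPI H Kpm Kpl KI qstar x) x =
        (Matrix.fromBlocks (0 : Matrix I4 I4 ℝ) 1 (-1)
            (JPI2 Kpl - RPI2 Dl Dm Kpm Kpl)).mulVec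
          fun i => gradient (HPI H KI qstar) x i := by
  intro x
  have hg := grad_HPI H hH KI hKI qstar x
  have h01 : Kpl 0 1 = Kpl 0 1 := rfl
  funext i
  rcases i with (j|j)|j <;> fin_cases j <;>
    simp only [openLoop, uPI, R2, Bmat, JPI2, RPI2, hg, Matrix.mulVec, dotProduct,
      Fintype.sum_sum_type, Fin.sum_univ_two, Matrix.fromBlocks_apply₁₁,
      Matrix.fromBlocks_apply₁₂, Matrix.fromBlocks_apply₂₁, Matrix.fromBlocks_apply₂₂,
      Matrix.fromRows_apply_inl, Matrix.fromRows_apply_inr, Sum.elim_inl, Sum.elim_inr,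
      Matrix.sub_apply, Matrix.add_apply, Matrix.smul_apply, Matrix.neg_apply,
      Matrix.zero_apply, Matrix.one_apply, Matrix.transpose_apply, Pi.sub_apply,
      Pi.neg_apply, Pi.zero_apply, Pi.one_apply, smul_eq_mul, qm] <;>
    simp <;> ring


end
end

section
/- Let K_s ∈ ℝ^{2×2} be symmetric positive definite, let A = diag(a₁,a₂,a₃,a₄) ∈ ℝ^{4×4} with a_i > 0, let K_c ∈ ℝ^{2×2} be symmetric positive definite, and let M_* ∈ ℝ^{4×4} be symmetric positive definite. Set K_S = [[K_s, −K_s],[−K_s, K_s]] ∈ ℝ^{4×4} and K_C = blockdiag(0_{2×2}, K_c) ∈ ℝ^{4×4}. Then the 12×12 symmetric matrix [[K_S + A, 0_{4×4}, A], [0_{4×4}, M_*^{-1}, 0_{4×4}], [A, 0_{4×4}, A + K_C]] is positive definite. -/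
open Matrix

noncomputable section

/-- for `K_s ∈ ℝ^{2×2}` symmetric positive definite, `A` a 4×4 diagonal
matrix with positive diagonal entries, `K_c ∈ ℝ^{2×2}` symmetric positive definite and
`M_* ∈ ℝ^{4×4}` symmetric positive definite, the 12×12 symmetric matrix
`[[K_S + A, 0, A], [0, M_*⁻¹, 0], [A, 0, A + K_C]]`
(with `K_S = [[K_s, −K_s],[−K_s, K_s]]` and `K_C = blockdiag(0, K_c)`) is positive
definite. -/
theorem hessian_Hzeta_posDef (Ks Kc : Matrix (Fin 2) (Fin 2) ℝ)
    (hKs : Ks.PosDef) (hKc : Kc.PosDef)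
    (a : I4 → ℝ) (ha : ∀ i, 0 < a i)
    (Mstar : Matrix I4 I4 ℝ) (hMstar : Mstar.PosDef) :
    (Matrix.fromBlocks
      (Matrix.fromBlocks
        (Matrix.fromBlocks Ks (-Ks) (-Ks) Ks + Matrix.diagonal a)
        0 0 (Mstar⁻¹))
      (Matrix.fromRows (Matrix.diagonal a) (0 : Matrix I4 I4 ℝ))
      (Matrix.fromCols (Matrix.diagonal a) (0 : Matrix I4 I4 ℝ))
      (Matrix.diagonal a + Matrix.fromBlocks 0 0 0 Kc)).PosDef := by
  have hMinv : (Mstar⁻¹).PosDef := hMstar.inv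
  have hKsT : Ksᵀ = Ks := by simpa [Matrix.IsSymm] using hKs.1
  have hKcT : Kcᵀ = Kc := by simpa [Matrix.IsSymm] using hKc.1
  have hMT : Mstarᵀ = Mstar := by simpa [Matrix.IsSymm] using hMstar.1
  rw [posDef_iff_dotProduct_mulVec]
  constructor
  · show _ = _
    rw [conjTranspose_eq_transpose_of_trivial]
    simp [fromBlocks_transpose, transpose_fromRows, transpose_fromCols,
      transpose_add, transpose_nonsing_inv, hKsT, hKcT, hMT]
  · intro x hx
    set u : I4 → ℝ := x ∘ Sum.inl ∘ Sum.inl with hu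
    set v : I4 → ℝ := x ∘ Sum.inl ∘ Sum.inr with hv
    set w : I4 → ℝ := x ∘ Sum.inr with hw
    have hxe : x = Sum.elim (Sum.elim u v) w := by
      funext i; rcases i with (i|i)|i <;> rfl
    have key : star x ⬝ᵥ
        ((Matrix.fromBlocks
          (Matrix.fromBlocks
            (Matrix.fromBlocks Ks (-Ks) (-Ks) Ks + Matrix.diagonal a)
            0 0 (Mstar⁻¹))
          (Matrix.fromRows (Matrix.diagonal a) (0 : Matrix I4 I4 ℝ))
          (Matrix.fromCols (Matrix.diagonal a) (0 : Matrix I4 I4 ℝ))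
          (Matrix.diagonal a + Matrix.fromBlocks 0 0 0 Kc)) *ᵥ x)
        = (u ∘ Sum.inl - u ∘ Sum.inr) ⬝ᵥ (Ks *ᵥ (u ∘ Sum.inl - u ∘ Sum.inr))
          + v ⬝ᵥ (Mstar⁻¹ *ᵥ v)
          + (w ∘ Sum.inr) ⬝ᵥ (Kc *ᵥ (w ∘ Sum.inr))
          + ∑ i, a i * (u i + w i)^2 := by
      rw [hxe]
      simp [star, dotProduct, mulVec, fromBlocks, fromRows_apply_inl, fromRows_apply_inr, fromCols_apply_inl, fromCols_apply_inr,
        Fintype.sum_sum_type, Fin.sum_univ_two, Matrix.diagonal, Matrix.of_apply]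
      ring
    rw [key]
    have nn1 : 0 ≤ (u ∘ Sum.inl - u ∘ Sum.inr) ⬝ᵥ (Ks *ᵥ (u ∘ Sum.inl - u ∘ Sum.inr)) := by
      simpa using hKs.posSemidef.dotProduct_mulVec_nonneg (u ∘ Sum.inl - u ∘ Sum.inr)
    have nn2 : 0 ≤ v ⬝ᵥ (Mstar⁻¹ *ᵥ v) := by simpa using hMinv.posSemidef.dotProduct_mulVec_nonneg v
    have nn3 : 0 ≤ (w ∘ Sum.inr) ⬝ᵥ (Kc *ᵥ (w ∘ Sum.inr)) := by
      simpa using hKc.posSemidef.dotProduct_mulVec_nonneg (w ∘ Sum.inr)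
    have nn4 : 0 ≤ ∑ i, a i * (u i + w i)^2 :=
      Finset.sum_nonneg fun i _ => mul_nonneg (ha i).le (sq_nonneg _)
    by_cases h1 : u ∘ Sum.inl - u ∘ Sum.inr = 0
    · by_cases h2 : v = 0
      · by_cases h3 : w ∘ Sum.inr = 0
        · by_cases h4 : u + w = 0
          · exfalso
            apply hx
            have hu0 : u = 0 := by
              funext j
              have e3 : ∀ k, w (Sum.inr k) = 0 := fun k => congrFun h3 k
              have e4 : ∀ k, u k + w k = 0 := fun k => congrFun h4 k
              cases j with
              | inl k =>
                have e1 := congrFun h1 k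
                have := e4 (Sum.inr k)
                have := e3 k
                simp only [Pi.sub_apply, Function.comp_apply, Pi.zero_apply] at e1 ⊢
                linarith
              | inr k =>
                have := e4 (Sum.inr k)
                have := e3 k
                simp only [Pi.zero_apply]
                linarith
            have hw0 : w = 0 := by
              funext j
              have e1 := congrFun h4 j
              have e2 := congrFun hu0 j
              simp only [Pi.add_apply, Pi.zero_apply] at e1 e2 ⊢
              linarith
            rw [hxe, hu0, hw0, h2]
            simp
          · have : ∃ i, (u + w) i ≠ 0 := by
              by_contra h
              push_neg at h
              exact h4 (funext h)
            obtain ⟨i, hi⟩ := this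
            have pos4 : 0 < ∑ j, a j * (u j + w j)^2 :=
              Finset.sum_pos' (fun j _ => mul_nonneg (ha j).le (sq_nonneg _))
                ⟨i, Finset.mem_univ i, mul_pos (ha i) (by positivity)⟩
            linarith
        · have pos3 : 0 < (w ∘ Sum.inr) ⬝ᵥ (Kc *ᵥ (w ∘ Sum.inr)) := by
            simpa using hKc.dotProduct_mulVec_pos h3
          linarith
      · have pos2 : 0 < v ⬝ᵥ (Mstar⁻¹ *ᵥ v) := by simpa using hMinv.dotProduct_mulVec_pos h2
        linarith
    · have pos1 : 0 < (u ∘ Sum.inl - u ∘ Sum.inr) ⬝ᵥ (Ks *ᵥ (u ∘ Sum.inl - u ∘ Sum.inr)) := by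
        simpa using hKs.dotProduct_mulVec_pos h1
      linarith

end
end
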